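/- arXiv:2305.07472 — 3 statements merged into one kernel-verified Lean document; each statement's English description precedes it below -/
import Mathlib

section
/- If a social choice function f is Bayesian Incentive Compatible and fully implementable in a solution concept S via mechanism γ, then S satisfies Weak Solution Consistency for γ. -/
/-- If a social choice function `f` is Bayesian Incentive Compatible and
fully implementable in a solution concept `Sol` via mechanism `(Act, μ)`, then the solution
concept satisfies Weak Solution Consistency for that mechanism. -/
theorem stmt1
    {I A : Type} [Fintype I] [DecidableEq I]
    {T : I → Type} [∀ i, Fintype (T i)]
    {Act : I → Type}
    (u : I → A → (∀ i, T i) → ℝ)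
    (p : ∀ i, T i → (∀ i, T i) → ℝ)
    (hp_nonneg : ∀ i (ti : T i) t, 0 ≤ p i ti t)
    (hp_supp : ∀ i (ti : T i) t, 0 < p i ti t → t i = ti)
    (hp_full : ∀ i (ti : T i) t, t i = ti → 0 < p i ti t)
    (μ : (∀ i, Act i) → A)
    (Sol : Set (∀ i, T i → Act i))
    (f : (∀ i, T i) → A)
    -- f is Bayesian Incentive Compatible
    (hbic : ∀ i (ti ti' : T i),
      ∑ t : ∀ i, T i, p i ti t * u i (f (Function.update t i ti)) t
        ≥ ∑ t : ∀ i, T i, p i ti t * u i (f (Function.update t i ti')) t)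
    -- full implementation: some solution exists, and every solution yields f
    (hne : Sol.Nonempty)
    (himpl : ∀ σ ∈ Sol, ∀ t, μ (fun j => σ j (t j)) = f t) :
    -- Weak Solution Consistency for the implementing mechanism
    ∀ i (ti : T i), ∃ σ ∈ Sol, ∀ ti' : T i,
      ∑ t : ∀ i, T i,
          p i ti t * u i (μ (fun j => σ j (Function.update t i ti j))) t
        ≥ ∑ t : ∀ i, T i,
          p i ti t * u i (μ (fun j => σ j (Function.update t i ti' j))) t := by
  intro i ti
  obtain ⟨σ, hσ⟩ := hne
  refine ⟨σ, hσ, fun ti' => ?_⟩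
  have h := fun t => himpl σ hσ t
  simp only [h]
  exact hbic i ti ti'
end

section
/- If a social choice set F is fully implementable in a Solution Consistent solution concept whose admissible expectations are type-independent, then for every agent i there exists a single f ∈ F that is BIC for all types t_i ∈ T_i of agent i. -/
/-- If a social choice set `F` is fully implementable in a Solution
Consistent solution concept `(R, E)` whose admissible expectations are type-independent,
then for every agent `i` there is a single `f ∈ F` that is BIC for all types of agent `i`.

Expectations `e i ti : ∀ j, T j → Act j` are conjectures about opponents' play;
`R e ⊆ B e` (best replies), the solution set is `Sol = ⋃_{e ∈ E} R e`, and Solution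
Consistency requires for each `(i, ti)` a witness `e ∈ E`, `σ ∈ R e` with the combined
profile `(σ_i, e_{i,ti})` itself a solution. -/
theorem stmt6
    {I A : Type} [Fintype I] [DecidableEq I]
    {T : I → Type} [∀ i, Fintype (T i)]
    {Act : I → Type}
    (u : I → A → (∀ i, T i) → ℝ)
    (p : ∀ i, T i → (∀ i, T i) → ℝ)
    (hp_nonneg : ∀ i (ti : T i) t, 0 ≤ p i ti t)
    (hp_supp : ∀ i (ti : T i) t, 0 < p i ti t → t i = ti)
    (hp_full : ∀ i (ti : T i) t, t i = ti → 0 < p i ti t)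
    (μ : (∀ i, Act i) → A)
    (E : Set (∀ i, T i → (∀ j, T j → Act j)))
    (R : (∀ i, T i → (∀ j, T j → Act j)) → Set (∀ i, T i → Act i))
    (Sol : Set (∀ i, T i → Act i))
    (F : Set ((∀ i, T i) → A))
    -- the solution set is the union of responses over admissible expectations
    (hSol : Sol = {σ | ∃ e ∈ E, σ ∈ R e})
    -- responses are interim best replies: R ⊆ B
    (hRB : ∀ e ∈ E, ∀ σ ∈ R e, ∀ i (ti : T i) (a : Act i),
      ∑ t : ∀ i, T i,
          p i ti t * u i (μ (Function.update (fun j => e i ti j (t j)) i (σ i ti))) t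
        ≥ ∑ t : ∀ i, T i,
          p i ti t * u i (μ (Function.update (fun j => e i ti j (t j)) i a)) t)
    -- expectations are type-independent
    (hti : ∀ e ∈ E, ∀ i (ti ti' : T i), e i ti = e i ti')
    -- Solution Consistency
    (hsc : ∀ i (ti : T i), ∃ e ∈ E, ∃ σ ∈ R e,
      Function.update (e i ti) i (σ i) ∈ Sol)
    -- full implementation of the set F
    (hne : Sol.Nonempty)
    (himpl : (fun σ : ∀ i, T i → Act i => fun t => μ (fun j => σ j (t j))) '' Sol = F) :
    -- conclusion: for each agent i a single f ∈ F is BIC for all of i's types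
    ∀ i, ∃ f ∈ F, ∀ ti ti' : T i,
      ∑ t : ∀ i, T i, p i ti t * u i (f (Function.update t i ti)) t
        ≥ ∑ t : ∀ i, T i, p i ti t * u i (f (Function.update t i ti')) t := by
  intro i
  by_cases h : Nonempty (T i)
  · obtain ⟨ti0⟩ := h
    obtain ⟨e, he, σ, hσ, hτ⟩ := hsc i ti0
    set τ : ∀ j, T j → Act j := Function.update (e i ti0) i (σ i) with hτdef
    refine ⟨fun t => μ (fun j => τ j (t j)), ?_, ?_⟩
    · rw [← himpl]; exact ⟨τ, hτ, rfl⟩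
    · intro ti ti'
      have hee : e i ti0 = e i ti := hti e he i ti0 ti
      have harg : ∀ (s : T i) (t : ∀ j, T j),
          (fun j => τ j (Function.update t i s j))
            = Function.update (fun j => e i ti j (t j)) i (σ i s) := by
        intro s t
        funext j
        rcases eq_or_ne j i with rfl | hj
        · simp [τ]
        · simp only [τ, Function.update_of_ne hj, ← hee]
      have key := hRB e he σ hσ i ti (σ i ti')
      simp only [harg]
      exact key
  · obtain ⟨σ, hσ⟩ := hne
    refine ⟨fun t => μ (fun j => σ j (t j)), ?_, fun ti => (h ⟨ti⟩).elim⟩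
    rw [← himpl]; exact ⟨σ, hσ, rfl⟩
end

section
/- In the 2×2 cursed-equilibrium example game with parameter ζ ∈ (2, 2/(1−χ)) and χ ∈ (0,1), the unique χ-cursed equilibrium has each player play A when her type is 1 and B when her type is −1; moreover this solution violates Weak Solution Consistency because type t_i = 1 strictly prefers to mimic type −1: her equilibrium interim payoff 1 − ζ/2 is strictly negative while mimicking yields 0. -/
namespace Stmt13

/-- Type values: `true ↦ 1`, `false ↦ −1`. -/
noncomputable def tval (t : Bool) : ℝ := if t then 1 else -1

/-- Stage payoff of a player with own type value `ti` and opponent's type value `tj`,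
when she plays `A` iff `ai` and the opponent plays `A` iff `aj`:
`(A,A) ↦ t_i`, `(A,B) ↦ t_i + ζ t_j`, and `0` whenever she plays `B`. -/
noncomputable def pay (ζ ti tj : ℝ) (ai aj : Bool) : ℝ :=
  if ai then (if aj then ti else ti + ζ * tj) else 0

/-- Cursed interim payoff of playing `A` for type `t` of player `i`, given the opponent's
strategy `σ_{-i}` (probabilities of playing `A`):
`t_i − (1/2)(1−χ)ζ(σ_{-i}(1)[A] − σ_{-i}(−1)[A])`; playing `B` yields `0`. -/
noncomputable def cursedA (χ ζ : ℝ) (σopp : Bool → ℝ) (t : Bool) : ℝ :=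
  tval t - (1 / 2) * (1 - χ) * ζ * (σopp true - σopp false)

/-- In the 2×2 cursed-equilibrium example with `ζ ∈ (2, 2/(1−χ))` and
`χ ∈ (0,1)`: (1) the unique χ-cursed equilibrium has each player play `A` when her type is
`1` and `B` when her type is `−1` (strategies `σ i t` give the probability of playing `A`);
and (2) this solution violates Weak Solution Consistency, since the true interim payoff of
type `1` from her equilibrium action, `(1/2)·1 + (1/2)(1 − ζ) = 1 − ζ/2`, is strictly
negative, while mimicking type `−1` (playing `B`) yields `0`. -/
theorem stmt13 (χ ζ : ℝ) (hχ : χ ∈ Set.Ioo (0:ℝ) 1)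
    (hζ1 : 2 < ζ) (hζ2 : ζ < 2 / (1 - χ)) :
    -- (1) uniqueness of the cursed equilibrium
    (∀ σ : Bool → Bool → ℝ,   -- player (as Bool) → type → probability of playing A
      (∀ i t, σ i t ∈ Set.Icc (0:ℝ) 1) →
      -- χ-cursed equilibrium: each type best responds to cursed beliefs
      (∀ i t, (0 < cursedA χ ζ (σ (!i)) t → σ i t = 1) ∧
              (cursedA χ ζ (σ (!i)) t < 0 → σ i t = 0)) →
      ∀ i, σ i true = 1 ∧ σ i false = 0)
    ∧
    -- (2) WSC violation: at the equilibrium (type 1 plays A, type −1 plays B), the true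
    -- interim payoff of type 1 is 1 − ζ/2 < 0, strictly below the mimicking payoff 0
    ((1 / 2) * pay ζ (tval true) (tval true) true true
        + (1 / 2) * pay ζ (tval true) (tval false) true false
      = 1 - ζ / 2)
    ∧ (1 - ζ / 2 < (0:ℝ)) := by
  obtain ⟨hχ0, hχ1⟩ := hχ
  have h1χ : (0:ℝ) < 1 - χ := by linarith
  have hc2 : (1 - χ) * ζ < 2 := by
    have := (lt_div_iff₀ h1χ).mp hζ2
    linarith
  refine ⟨?_, ?_, by linarith⟩
  · intro σ hIcc hBR i
    have hd1 : σ (!i) true - σ (!i) false ≤ 1 := by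
      have := (hIcc (!i) true).2; have := (hIcc (!i) false).1; linarith
    have hd2 : -1 ≤ σ (!i) true - σ (!i) false := by
      have := (hIcc (!i) true).1; have := (hIcc (!i) false).2; linarith
    have hζ0 : (0:ℝ) < ζ := by linarith
    have habs : |(1 / 2) * (1 - χ) * ζ * (σ (!i) true - σ (!i) false)| < 1 := by
      rw [abs_lt]
      constructor <;> nlinarith [mul_pos h1χ hζ0]
    rw [abs_lt] at habs
    constructor
    · exact (hBR i true).1 (by simp [cursedA, tval]; linarith [habs.2])
    · exact (hBR i false).2 (by simp [cursedA, tval]; linarith [habs.1])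
  · simp [pay, tval]; ring

end Stmt13
end
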